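/- arXiv:2404.06684 — 2 statements merged into one kernel-verified Lean document; each statement's English description precedes it below -/
import Mathlib

section
/- Let x_0, …, x_m (m ≥ 1) be distinct points of the weighted Hamming cube H_W. Then the family (x_0,…,x_m) is affinely independent in ℝⁿ if and only if for every nonzero ξ ∈ ℝ^{m+1} with ∑_i ξ_i = 0 one has ∑_{i,j} d(x_i,x_j) ξ_i ξ_j ≠ 0 (that is, {x_0,…,x_m} admits no nontrivial 1-polygonal equality). -/
/-!
On a coordinate with values in `{0, c}` one has `|a - b| = a + b - 2ab/c`. For weights `ξ` of
total mass zero the linear terms cancel, and the 1-polygonal form becomes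
`-2 ∑ₖ (∑ᵢ ξᵢ xᵢₖ)² / wₖ`. Hence it vanishes exactly when `∑ᵢ ξᵢ xᵢ = 0`, i.e. when `ξ` is an
affine dependence of the points.
-/

open Finset

theorem abs_sub_eq_of_eq_zero_or_eq {a b c : ℝ} (hc : 0 < c) (ha : a = 0 ∨ a = c)
    (hb : b = 0 ∨ b = c) : |a - b| = a + b - 2 * a * b / c := by
  rcases ha with rfl | rfl <;> rcases hb with rfl | rfl
  · simp
  · simp [abs_of_pos hc]
  · simp [abs_of_pos hc]
  · rw [sub_self, abs_zero, mul_assoc, mul_div_assoc, mul_div_cancel_right₀ _ hc.ne']; ring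

theorem sum_sum_abs_sub_mul_mul_eq {ι : Type*} [Fintype ι] {c : ℝ} (hc : 0 < c) {a : ι → ℝ}
    (ha : ∀ i, a i = 0 ∨ a i = c) {ξ : ι → ℝ} (hξ : ∑ i, ξ i = 0) :
    ∑ i, ∑ j, |a i - a j| * ξ i * ξ j = -(2 * (∑ i, ξ i * a i) ^ 2 / c) := by
  have expand : ∀ i j, |a i - a j| * ξ i * ξ j
      = (ξ i * a i) * ξ j + ξ i * (ξ j * a j) - 2 / c * ((ξ i * a i) * (ξ j * a j)) := by
    intro i j
    rw [abs_sub_eq_of_eq_zero_or_eq hc (ha i) (ha j)]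
    ring
  simp only [expand, sum_add_distrib, sum_sub_distrib, ← mul_sum, ← sum_mul, hξ]
  ring

theorem sum_sum_sum_abs_sub_mul_mul_eq {ι κ : Type*} [Fintype ι] [Fintype κ] {w : κ → ℝ}
    (hw : ∀ k, 0 < w k) {x : ι → κ → ℝ} (hx : ∀ i k, x i k = 0 ∨ x i k = w k)
    {ξ : ι → ℝ} (hξ : ∑ i, ξ i = 0) :
    ∑ i, ∑ j, (∑ k, |x i k - x j k|) * ξ i * ξ j
      = -(2 * ∑ k, (∑ i, ξ i * x i k) ^ 2 / w k) := by
  calc ∑ i, ∑ j, (∑ k, |x i k - x j k|) * ξ i * ξ j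
      = ∑ k, ∑ i, ∑ j, |x i k - x j k| * ξ i * ξ j := by
        simp_rw [sum_mul, sum_comm (γ := κ)]
    _ = ∑ k, -(2 * (∑ i, ξ i * x i k) ^ 2 / w k) :=
        sum_congr rfl fun k _ => sum_sum_abs_sub_mul_mul_eq (hw k) (hx · k) hξ
    _ = _ := by simp only [sum_neg_distrib, mul_sum, mul_div_assoc]

theorem sum_sum_sum_abs_sub_mul_mul_eq_zero_iff {ι κ : Type*} [Fintype ι] [Fintype κ] {w : κ → ℝ}
    (hw : ∀ k, 0 < w k) {x : ι → κ → ℝ} (hx : ∀ i k, x i k = 0 ∨ x i k = w k)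
    {ξ : ι → ℝ} (hξ : ∑ i, ξ i = 0) :
    ∑ i, ∑ j, (∑ k, |x i k - x j k|) * ξ i * ξ j = 0 ↔ ∑ i, ξ i • x i = 0 := by
  rw [sum_sum_sum_abs_sub_mul_mul_eq hw hx hξ, neg_eq_zero, mul_eq_zero, or_iff_right two_ne_zero,
    sum_eq_zero_iff_of_nonneg fun k _ => div_nonneg (sq_nonneg _) (hw k).le, funext_iff]
  simp [(hw _).ne', Finset.sum_apply]

theorem stmt7_general (n m : ℕ) (w : Fin n → ℝ) (hw : ∀ k, 0 < w k)
    (x : Fin (m + 1) → (Fin n → ℝ))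
    (hxH : ∀ i k, x i k = 0 ∨ x i k = w k) :
    AffineIndependent ℝ x ↔
      (∀ ξ : Fin (m + 1) → ℝ, ξ ≠ 0 → ∑ i, ξ i = 0 →
        ∑ i, ∑ j, (∑ k, |x i k - x j k|) * ξ i * ξ j ≠ 0) := by
  rw [affineIndependent_iff_of_fintype]
  refine forall_congr' fun ξ => ?_
  by_cases hξ : ∑ i, ξ i = 0
  · rw [univ.weightedVSub_eq_linear_combination hξ,
      ← sum_sum_sum_abs_sub_mul_mul_eq_zero_iff hw hxH hξ]
    simp only [ne_eq, funext_iff, Pi.zero_apply]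
    tauto
  · tauto

/-- A nontrivial subset of a weighted Hamming cube is affinely independent iff it
admits no nontrivial 1-polygonal equality. -/
theorem stmt7 (n m : ℕ) (hn : 1 ≤ n) (hm : 1 ≤ m) (w : Fin n → ℝ) (hw : ∀ k, 0 < w k)
    (x : Fin (m + 1) → (Fin n → ℝ))
    (hxH : ∀ i k, x i k = 0 ∨ x i k = w k)
    (hinj : Function.Injective x) :
    AffineIndependent ℝ x ↔
      (∀ ξ : Fin (m + 1) → ℝ, ξ ≠ 0 → ∑ i, ξ i = 0 →
        ∑ i, ∑ j, (∑ k, |x i k - x j k|) * ξ i * ξ j ≠ 0) :=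
  stmt7_general n m w hw x hxH
end

section
/- Let Y be a real inner product space and let x_0, …, x_m (m ≥ 1) be distinct points of Y. Let Γ = min { 4 ‖∑_i ξ_i x_i‖² | ξ ∈ ℝ^{m+1}, ∑_i ξ_i = 0, ∑_i |ξ_i| = 1 } (this minimum is attained). Then: (a) for every ξ ∈ ℝ^{m+1} with ∑_i ξ_i = 0, Γ·(∑_i |ξ_i|)² + 2 ∑_{i,j} ξ_i ξ_j ‖x_i − x_j‖² ≤ 0; and (b) Γ is the largest real constant with property (a). (That is, the 2-negative type gap Γ₂ of {x_0,…,x_m} equals Γ.) -/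
/-!
For weights with `∑ ξᵢ = 0` the terms `‖xᵢ‖²` in `‖xᵢ - xⱼ‖² = ‖xᵢ‖² - 2⟪xᵢ, xⱼ⟫ + ‖xⱼ‖²` cancel,
leaving `∑ᵢⱼ ξᵢ ξⱼ ‖xᵢ - xⱼ‖² = -2 ‖∑ ξᵢ xᵢ‖²`. The gap inequality thus says
`Γ (∑ |ξᵢ|)² ≤ 4 ‖∑ ξᵢ xᵢ‖²`; both sides are homogeneous of degree two in `ξ`, so it suffices to
check it on the compact set `∑ ξᵢ = 0, ∑ |ξᵢ| = 1`, where the continuous right-hand side attains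
its minimum. Testing the inequality at a minimiser shows no larger constant works.
-/

open Finset

section

variable {ι : Type*} [Fintype ι]

theorem sum_sum_mul_mul_norm_sub_sq_of_sum_eq_zero {Y : Type*} [NormedAddCommGroup Y]
    [InnerProductSpace ℝ Y] (x : ι → Y) {ξ : ι → ℝ} (hξ : ∑ i, ξ i = 0) :
    ∑ i, ∑ j, ξ i * ξ j * ‖x i - x j‖ ^ 2 = -(2 * ‖∑ i, ξ i • x i‖ ^ 2) := by
  have expand (i j : ι) : ξ i * ξ j * ‖x i - x j‖ ^ 2 =
      ξ j * (ξ i * ‖x i‖ ^ 2) + ξ i * (ξ j * ‖x j‖ ^ 2) - 2 * inner ℝ (ξ i • x i) (ξ j • x j) := by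
    rw [norm_sub_sq_real, real_inner_smul_left, real_inner_smul_right]
    ring
  simp only [expand, sum_sub_distrib, sum_add_distrib, ← mul_sum, ← sum_mul, hξ, zero_mul,
    sum_const_zero, ← inner_sum, ← sum_inner, real_inner_self_eq_norm_sq]
  ring

def zeroSumL1Sphere (ι : Type*) [Fintype ι] : Set (ι → ℝ) :=
  {ξ | ∑ i, ξ i = 0 ∧ ∑ i, |ξ i| = 1}

theorem isCompact_zeroSumL1Sphere : IsCompact (zeroSumL1Sphere ι) := by
  refine Metric.isCompact_of_isClosed_isBounded ?_ ?_
  · exact (isClosed_eq (by fun_prop) continuous_const).inter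
      (isClosed_eq (by fun_prop) continuous_const)
  · refine (Metric.isBounded_closedBall (x := (0 : ι → ℝ)) (r := 1)).subset fun ξ hξ => ?_
    rw [mem_closedBall_zero_iff, pi_norm_le_iff_of_nonneg zero_le_one]
    intro i
    exact hξ.2 ▸ single_le_sum (f := fun j => |ξ j|) (fun j _ => abs_nonneg _) (mem_univ i)

theorem zeroSumL1Sphere_nonempty [Nontrivial ι] : (zeroSumL1Sphere ι).Nonempty := by
  classical
  obtain ⟨a, b, hab⟩ := exists_pair_ne ι
  let ξ : ι → ℝ := fun i => if i = a then 1 / 2 else if i = b then -(1 / 2) else 0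
  have hξ {f : ℝ → ℝ} (hf : f 0 = 0) : ∑ i, f (ξ i) = f (1 / 2) + f (-(1 / 2)) := by
    rw [Fintype.sum_eq_add a b hab fun i hi => by simp [ξ, hi.1, hi.2, hf]]
    simp [ξ, hab.symm]
  refine ⟨ξ, ?_, ?_⟩
  · simpa using hξ (f := id) rfl
  · norm_num [hξ (f := abs) abs_zero]

theorem smul_mem_zeroSumL1Sphere {ξ : ι → ℝ} (hξ : ∑ i, ξ i = 0) (hξ' : ∑ i, |ξ i| ≠ 0) :
    (∑ i, |ξ i|)⁻¹ • ξ ∈ zeroSumL1Sphere ι := by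
  have hpos : 0 < (∑ i, |ξ i|)⁻¹ := inv_pos.2 <| (sum_nonneg fun i _ => abs_nonneg _).lt_of_ne' hξ'
  refine ⟨?_, ?_⟩
  · simp [← mul_sum, hξ]
  · simp [abs_mul, abs_of_pos hpos, ← mul_sum, hξ']

theorem norm_sum_smul_mul_sum_abs_le_of_isMinOn {Y : Type*} [SeminormedAddCommGroup Y] [NormedSpace ℝ Y]
    (x : ι → Y) {ξ₀ : ι → ℝ}
    (hmin : IsMinOn (fun η : ι → ℝ => ‖∑ i, η i • x i‖) (zeroSumL1Sphere ι) ξ₀)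
    {ξ : ι → ℝ} (hξ : ∑ i, ξ i = 0) :
    ‖∑ i, ξ₀ i • x i‖ * ∑ i, |ξ i| ≤ ‖∑ i, ξ i • x i‖ := by
  rcases eq_or_ne (∑ i, |ξ i|) 0 with hs | hs
  · simp [hs]
  have hs' : 0 < ∑ i, |ξ i| := (sum_nonneg fun i _ => abs_nonneg _).lt_of_ne' hs
  have : ‖∑ i, ξ₀ i • x i‖ ≤ ‖∑ i, ((∑ i, |ξ i|)⁻¹ • ξ) i • x i‖ :=
    hmin (smul_mem_zeroSumL1Sphere hξ hs)
  simp only [Pi.smul_apply, smul_eq_mul, ← smul_smul, ← smul_sum, norm_smul, Real.norm_eq_abs,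
    abs_inv, abs_of_pos hs'] at this
  rwa [← le_div_iff₀ hs', div_eq_inv_mul]

end

theorem stmt19_general (Y : Type*) [NormedAddCommGroup Y] [InnerProductSpace ℝ Y]
    (m : ℕ) (hm : 1 ≤ m) (x : Fin (m + 1) → Y) :
    ∃ Γ : ℝ,
      IsLeast { t : ℝ | ∃ ξ : Fin (m + 1) → ℝ, ∑ i, ξ i = 0 ∧ ∑ i, |ξ i| = 1 ∧
          t = 4 * ‖∑ i, ξ i • x i‖ ^ 2 } Γ ∧
      (∀ ξ : Fin (m + 1) → ℝ, ∑ i, ξ i = 0 →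
        Γ * (∑ i, |ξ i|) ^ 2 + 2 * ∑ i, ∑ j, ξ i * ξ j * ‖x i - x j‖ ^ 2 ≤ 0) ∧
      (∀ Γ' : ℝ,
        (∀ ξ : Fin (m + 1) → ℝ, ∑ i, ξ i = 0 →
          Γ' * (∑ i, |ξ i|) ^ 2 + 2 * ∑ i, ∑ j, ξ i * ξ j * ‖x i - x j‖ ^ 2 ≤ 0) →
        Γ' ≤ Γ) := by
  have : Nontrivial (Fin (m + 1)) := Fin.nontrivial_iff_two_le.2 (by omega)
  obtain ⟨ξ₀, hξ₀, hmin⟩ := isCompact_zeroSumL1Sphere.exists_isMinOn zeroSumL1Sphere_nonempty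
    (f := fun η : Fin (m + 1) → ℝ => ‖∑ i, η i • x i‖) (by fun_prop)
  refine ⟨4 * ‖∑ i, ξ₀ i • x i‖ ^ 2, ⟨⟨ξ₀, hξ₀.1, hξ₀.2, rfl⟩, ?_⟩, fun ξ hξ => ?_, fun Γ' hΓ' => ?_⟩
  · rintro _ ⟨ξ, hsum, habs, rfl⟩
    have : ‖∑ i, ξ₀ i • x i‖ ≤ ‖∑ i, ξ i • x i‖ := hmin ⟨hsum, habs⟩
    gcongr
  · have := norm_sum_smul_mul_sum_abs_le_of_isMinOn x hmin hξ
    rw [sum_sum_mul_mul_norm_sub_sq_of_sum_eq_zero x hξ]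
    have := pow_le_pow_left₀ (by positivity) this 2
    rw [mul_pow] at this
    linarith
  · have := hΓ' ξ₀ hξ₀.1
    rw [sum_sum_mul_mul_norm_sub_sq_of_sum_eq_zero x hξ₀.1, hξ₀.2] at this
    linarith

/-- The 2-negative type gap of a finite set of distinct points of a real inner
product space is `min { 4 ‖∑ᵢ ξᵢ xᵢ‖² : ∑ᵢ ξᵢ = 0, ∑ᵢ |ξᵢ| = 1 }`: the minimum is
attained, it satisfies the gap inequality, and it is the largest such constant. -/
theorem stmt19 (Y : Type*) [NormedAddCommGroup Y] [InnerProductSpace ℝ Y]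
    (m : ℕ) (hm : 1 ≤ m) (x : Fin (m + 1) → Y) (hinj : Function.Injective x) :
    ∃ Γ : ℝ,
      IsLeast { t : ℝ | ∃ ξ : Fin (m + 1) → ℝ, ∑ i, ξ i = 0 ∧ ∑ i, |ξ i| = 1 ∧
          t = 4 * ‖∑ i, ξ i • x i‖ ^ 2 } Γ ∧
      (∀ ξ : Fin (m + 1) → ℝ, ∑ i, ξ i = 0 →
        Γ * (∑ i, |ξ i|) ^ 2 + 2 * ∑ i, ∑ j, ξ i * ξ j * ‖x i - x j‖ ^ 2 ≤ 0) ∧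
      (∀ Γ' : ℝ,
        (∀ ξ : Fin (m + 1) → ℝ, ∑ i, ξ i = 0 →
          Γ' * (∑ i, |ξ i|) ^ 2 + 2 * ∑ i, ∑ j, ξ i * ξ j * ‖x i - x j‖ ^ 2 ≤ 0) →
        Γ' ≤ Γ) :=
  stmt19_general Y m hm x
end
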